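/- arXiv:2405.10301 — 2 statements merged into one kernel-verified Lean document; each statement's English description precedes it below -/
import Mathlib

section
/- If the random variables V_1, ..., V_n, V_{n+1} are exchangeable and almost surely have no ties, then the conformal p-value p = (1 + #{i ≤ n : V_i ≤ V_{n+1}})/(n+1) satisfies P(p ≤ t) ≤ t for every t ∈ (0,1). -/
open MeasureTheory Finset

namespace ConformalAux

/-- rank of coordinate j among the values of v -/
noncomputable def rank (n : ℕ) (j : Fin (n+1)) (v : Fin (n+1) → ℝ) : ℕ :=
  (Finset.univ.filter (fun i => v i ≤ v j)).card

lemma rank_eq_sum (n : ℕ) (j : Fin (n+1)) (v : Fin (n+1) → ℝ) :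
    rank n j v = ∑ i : Fin (n+1), if v i ≤ v j then 1 else 0 :=
  Finset.card_filter _ _

lemma measurable_rank (n : ℕ) (j : Fin (n+1)) : Measurable (rank n j) := by
  have : rank n j = fun v => ∑ i : Fin (n+1), if v i ≤ v j then 1 else 0 := by
    funext v; exact rank_eq_sum n j v
  rw [this]
  exact Finset.measurable_sum _ (fun i _ =>
    Measurable.ite (measurableSet_le (measurable_pi_apply i) (measurable_pi_apply j))
      measurable_const measurable_const)

lemma one_le_rank (n : ℕ) (j : Fin (n+1)) (v : Fin (n+1) → ℝ) : 1 ≤ rank n j v := by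
  have : j ∈ Finset.univ.filter (fun i => v i ≤ v j) := by simp
  exact Finset.card_pos.mpr ⟨j, this⟩

lemma rank_lt_rank (n : ℕ) {j k : Fin (n+1)} (v : Fin (n+1) → ℝ) (h : v j < v k) :
    rank n j v < rank n k v := by
  apply Finset.card_lt_card
  constructor
  · intro i hi
    simp only [mem_filter, mem_univ, true_and] at *
    exact hi.trans h.le
  · intro hsub
    have := hsub (by simp : k ∈ Finset.univ.filter (fun i => v i ≤ v k))
    simp only [mem_filter, mem_univ, true_and] at this
    exact absurd this (not_le.mpr h)

lemma count_rank_le (n : ℕ) (v : Fin (n+1) → ℝ)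
    (hv : ∀ i j, i ≠ j → v i ≠ v j) (m : ℕ) :
    (Finset.univ.filter (fun j => rank n j v ≤ m)).card ≤ m := by
  have := Finset.card_le_card_of_injOn (f := fun j => rank n j v)
    (s := Finset.univ.filter (fun j => rank n j v ≤ m)) (t := Finset.Icc 1 m)
    (fun j hj => by
      simp only [Finset.mem_coe, mem_filter, mem_univ, true_and] at hj
      simp [Finset.mem_Icc, one_le_rank n j v, hj])
    (fun j _ k _ hjk => by
      by_contra hne
      rcases lt_trichotomy (v j) (v k) with h | h | h
      · exact absurd hjk (Nat.ne_of_lt (rank_lt_rank n v h))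
      · exact hv j k hne h
      · exact absurd hjk.symm (Nat.ne_of_lt (rank_lt_rank n v h)))
  rwa [Nat.card_Icc] at this

lemma rank_comp (n : ℕ) (σ : Equiv.Perm (Fin (n+1))) (j : Fin (n+1)) (v : Fin (n+1) → ℝ) :
    rank n j (fun i => v (σ i)) = rank n (σ j) v := by
  unfold rank
  refine Finset.card_bij' (fun i _ => σ i) (fun i _ => σ.symm i) ?_ ?_ ?_ ?_ <;>
      intro i hi <;> aesop

lemma rank_last (n : ℕ) (v : Fin (n+1) → ℝ) :
    rank n (Fin.last n) v
      = 1 + (Finset.univ.filter (fun i : Fin n => v i.castSucc ≤ v (Fin.last n))).card := by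
  rw [rank_eq_sum, Fin.sum_univ_castSucc, if_pos le_rfl, Finset.card_filter]
  omega

end ConformalAux
open MeasureTheory Finset ConformalAux ENNReal in
/-- Marginal validity of the conformal p-value under exchangeability:
if `V 0, …, V n` (indices in `Fin (n+1)`, with `Fin.last n` playing the role of `V_{n+1}`)
are exchangeable and almost surely have no ties, then
`p = (1 + #{i ≤ n : V_i ≤ V_{n+1}})/(n+1)` satisfies `P(p ≤ t) ≤ t` for all `t ∈ (0,1)`. -/
theorem conformal_pvalue_valid {Ω : Type*} [MeasurableSpace Ω]
    (μ : Measure Ω) [IsProbabilityMeasure μ]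
    (n : ℕ) (V : Fin (n + 1) → Ω → ℝ)
    (hmeas : ∀ i, Measurable (V i))
    (hexch : ∀ σ : Equiv.Perm (Fin (n + 1)),
      Measure.map (fun ω => fun i => V (σ i) ω) μ = Measure.map (fun ω => fun i => V i ω) μ)
    (hties : ∀ i j, i ≠ j → μ {ω | V i ω = V j ω} = 0) :
    ∀ t ∈ Set.Ioo (0 : ℝ) 1,
      μ {ω | ((1 + (Finset.univ.filter
          (fun i : Fin n => V i.castSucc ω ≤ V (Fin.last n) ω)).card : ℝ) / (n + 1)) ≤ t}
        ≤ ENNReal.ofReal t := by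
  intro t ht
  obtain ⟨ht0, ht1⟩ := ht
  set m : ℕ := Nat.floor (t * (n + 1)) with hmdef
  set Vv : Ω → (Fin (n + 1) → ℝ) := fun ω i => V i ω with hVv
  have hVvmeas : Measurable Vv := measurable_pi_lambda _ hmeas
  have hnpos : (0 : ℝ) < (n : ℝ) + 1 := by positivity
  have htn : (0 : ℝ) ≤ t * (n + 1) := by positivity
  -- rewrite the event
  have hset : {ω | ((1 + (Finset.univ.filter
      (fun i : Fin n => V i.castSucc ω ≤ V (Fin.last n) ω)).card : ℝ) / (n + 1)) ≤ t}
      = {ω | rank n (Fin.last n) (Vv ω) ≤ m} := by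
    ext ω
    simp only [Set.mem_setOf_eq]
    rw [rank_last, hmdef, Nat.le_floor_iff htn]
    rw [div_le_iff₀ hnpos]
    push_cast
    constructor <;> intro h <;> linarith
  rw [hset]
  -- the no-ties set
  set N : Set Ω := ⋂ (i : Fin (n+1)) (j : Fin (n+1)) (_ : i ≠ j), {ω | V i ω ≠ V j ω} with hN
  have hNmeas : MeasurableSet N := by
    refine MeasurableSet.iInter fun i => MeasurableSet.iInter fun j =>
      MeasurableSet.iInter fun hij => ?_
    exact (measurableSet_eq_fun (hmeas i) (hmeas j)).compl
  have hNc : μ Nᶜ = 0 := by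
    rw [hN]
    simp only [Set.compl_iInter]
    refine measure_iUnion_null fun i => measure_iUnion_null fun j =>
      measure_iUnion_null fun hij => ?_
    have : {ω | V i ω ≠ V j ω}ᶜ = {ω | V i ω = V j ω} := by
      ext ω; simp
    rw [this]
    exact hties i j hij
  -- the event for rank j
  set B : Fin (n+1) → Set Ω := fun j => {ω | rank n j (Vv ω) ≤ m} with hB
  have hSmeas : ∀ j : Fin (n+1), MeasurableSet {v : Fin (n+1) → ℝ | rank n j v ≤ m} :=
    fun j => (measurable_rank n j) (measurableSet_le measurable_id measurable_const)
  have hBmeas : ∀ j, MeasurableSet (B j) := fun j => hVvmeas (hSmeas j)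
  -- all B j have the same measure
  have hkey : ∀ j : Fin (n+1), μ (B (Fin.last n)) = μ (B j) := by
    intro j
    set σ : Equiv.Perm (Fin (n+1)) := Equiv.swap j (Fin.last n) with hσ
    have hW : Measurable (fun ω => fun i => V (σ i) ω) :=
      measurable_pi_lambda _ (fun i => hmeas (σ i))
    have h1 : μ (B (Fin.last n))
        = Measure.map Vv μ {v : Fin (n+1) → ℝ | rank n (Fin.last n) v ≤ m} := by
      rw [Measure.map_apply hVvmeas (hSmeas (Fin.last n))]
      rfl
    have h2 : Measure.map Vv μ {v : Fin (n+1) → ℝ | rank n (Fin.last n) v ≤ m}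
        = μ ((fun ω => fun i => V (σ i) ω) ⁻¹' {v : Fin (n+1) → ℝ | rank n (Fin.last n) v ≤ m}) := by
      rw [← hexch σ, Measure.map_apply hW (hSmeas (Fin.last n))]
    have h3 : (fun ω => fun i => V (σ i) ω) ⁻¹' {v : Fin (n+1) → ℝ | rank n (Fin.last n) v ≤ m}
        = B j := by
      ext ω
      simp only [Set.mem_preimage, Set.mem_setOf_eq, hB]
      have : (fun i => V (σ i) ω) = (fun i => (Vv ω) (σ i)) := rfl
      rw [this, rank_comp n σ (Fin.last n) (Vv ω), hσ, Equiv.swap_apply_right]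
    rw [h1, h2, h3]
  -- pointwise sum of indicators bounded by m
  have hsum : ∑ j : Fin (n+1), μ (B j ∩ N) ≤ (m : ℝ≥0∞) := by
    have heq : ∀ j, μ (B j ∩ N) = ∫⁻ ω, (B j ∩ N).indicator (fun _ => (1 : ℝ≥0∞)) ω ∂μ := by
      intro j
      rw [lintegral_indicator ((hBmeas j).inter hNmeas)]
      simp
    calc ∑ j : Fin (n+1), μ (B j ∩ N)
        = ∫⁻ ω, ∑ j : Fin (n+1), (B j ∩ N).indicator (fun _ => (1 : ℝ≥0∞)) ω ∂μ := by
          rw [lintegral_finset_sum]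
          · exact Finset.sum_congr rfl fun j _ => heq j
          · exact fun j _ => (measurable_const.indicator ((hBmeas j).inter hNmeas))
      _ ≤ ∫⁻ _, (m : ℝ≥0∞) ∂μ := by
          refine lintegral_mono fun ω => ?_
          by_cases hω : ω ∈ N
          · have hcount : ∀ j : Fin (n+1),
                (B j ∩ N).indicator (fun _ => (1 : ℝ≥0∞)) ω
                  = if rank n j (Vv ω) ≤ m then 1 else 0 := by
              intro j
              by_cases hj : rank n j (Vv ω) ≤ m
              · rw [if_pos hj]
                have hmem : ω ∈ B j ∩ N := ⟨hj, hω⟩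
                exact Set.indicator_of_mem hmem (fun _ => (1 : ℝ≥0∞))
              · rw [if_neg hj, Set.indicator_of_notMem (fun hmem => hj hmem.1)]
            have hdist : ∀ i k, i ≠ k → Vv ω i ≠ Vv ω k := by
              intro i k hik
              have := hω
              simp only [hN, Set.mem_iInter, Set.mem_setOf_eq] at this
              exact this i k hik
            simp only [hcount]
            rw [Finset.sum_boole]
            exact_mod_cast Nat.cast_le.mpr (count_rank_le n (Vv ω) hdist m)
          · have : ∀ j : Fin (n+1), (B j ∩ N).indicator (fun _ => (1 : ℝ≥0∞)) ω = 0 :=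
              fun j => Set.indicator_of_notMem (fun hmem => hω hmem.2) _
            simp [this]
      _ = (m : ℝ≥0∞) := by
          rw [lintegral_const, measure_univ, mul_one]
  -- combine
  have hBN : ∀ j, μ (B j) ≤ μ (B j ∩ N) := by
    intro j
    calc μ (B j) ≤ μ ((B j ∩ N) ∪ Nᶜ) := by
          refine measure_mono fun ω hω => ?_
          by_cases h : ω ∈ N
          · exact Or.inl ⟨hω, h⟩
          · exact Or.inr h
      _ ≤ μ (B j ∩ N) + μ Nᶜ := measure_union_le _ _
      _ = μ (B j ∩ N) := by rw [hNc, add_zero]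
  have hmain : ((n : ℝ≥0∞) + 1) * μ (B (Fin.last n)) ≤ (m : ℝ≥0∞) := by
    have h1 : ∑ _j : Fin (n+1), μ (B (Fin.last n)) ≤ ∑ j : Fin (n+1), μ (B j ∩ N) :=
      Finset.sum_le_sum fun j _ => (hkey j).le.trans (hBN j)
    have h2 : ∑ _j : Fin (n+1), μ (B (Fin.last n))
        = ((n : ℝ≥0∞) + 1) * μ (B (Fin.last n)) := by
      rw [Finset.sum_const, Finset.card_univ, Fintype.card_fin, nsmul_eq_mul]
      push_cast
      ring
    rw [← h2]
    exact h1.trans hsum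
  have h4 : μ (B (Fin.last n)) ≤ (m : ℝ≥0∞) / ((n : ℝ≥0∞) + 1) := by
    rw [ENNReal.le_div_iff_mul_le (Or.inl (by simp)) (Or.inl (by finiteness))]
    rw [mul_comm]
    exact hmain
  have h5 : (m : ℝ≥0∞) / ((n : ℝ≥0∞) + 1) ≤ ENNReal.ofReal t := by
    have e1 : ((n : ℝ≥0∞) + 1) = ENNReal.ofReal ((n : ℝ) + 1) := by
      rw [ENNReal.ofReal_add (by positivity) zero_le_one]
      simp
    have e2 : (m : ℝ≥0∞) = ENNReal.ofReal (m : ℝ) := by simp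
    rw [e1, e2, ← ENNReal.ofReal_div_of_pos hnpos]
    refine ENNReal.ofReal_le_ofReal ?_
    rw [div_le_iff₀ hnpos]
    have := Nat.floor_le htn
    rw [hmdef]
    push_cast at this ⊢
    linarith
  exact h4.trans h5
end

section
/- If p_1,...,p_m are mutually independent p-values such that for each j in a set of true nulls H_0 ⊆ [m], P(p_j ≤ t) ≤ t for all t ∈ [0,1], then the Benjamini–Hochberg procedure at level α controls the false discovery rate: E[#(S ∩ H_0)/max(|S|,1)] ≤ α|H_0|/m ≤ α. -/
/-!
For a true null `j`, let `K j` be the number of BH rejections after `p j` is replaced by `0`.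
It is a function of the other p-values, hence independent of `p j`. Moreover `j` is rejected
iff `p j ≤ α K j / m`, and then exactly `K j` hypotheses are rejected, so the false discovery
proportion is `∑ j ∈ H0, 1{p j ≤ α K j / m} / K j`. Conditionally on `K j = k`, super-uniformity
bounds the `j`-th summand's expectation by `(1 / k) (α k / m) = α / m`.
-/

open MeasureTheory ProbabilityTheory
/-- The k-th order statistic `p_(k)` of the p-values (1-indexed). -/
noncomputable def orderStat {m : ℕ} (p : Fin m → ℝ) (k : ℕ) : ℝ :=
  (Multiset.sort (Multiset.map p Finset.univ.val) (· ≤ ·)).getD (k - 1) 0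

/-- `k* = max{k ∈ [m] : p_(k) ≤ α k / m}`, with `max ∅ = 0`. -/
noncomputable def kstar {m : ℕ} (p : Fin m → ℝ) (α : ℝ) : ℕ :=
  sSup {k | k ∈ Finset.Icc 1 m ∧ orderStat p k ≤ α * k / m}

/-- The Benjamini–Hochberg rejection set `S = {j : p_j ≤ α k*/m}`. -/
noncomputable def BH {m : ℕ} (p : Fin m → ℝ) (α : ℝ) : Finset (Fin m) :=
  Finset.univ.filter (fun j => p j ≤ α * (kstar p α) / m)

theorem List.Pairwise.getElem_le_iff_lt_countP {α : Type*} [LinearOrder α] {l : List α}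
    (hl : l.Pairwise (· ≤ ·)) (t : α) {k : ℕ} (hk : k < l.length) :
    l[k] ≤ t ↔ k < l.countP (· ≤ t) := by
  induction l generalizing k with
  | nil => simp at hk
  | cons a l ih =>
    rw [List.pairwise_cons] at hl
    by_cases ha : a ≤ t
    · cases k with
      | zero => simp [ha]
      | succ k => simp [ha, ih hl.2]
    · have hgt : ∀ b ∈ a :: l, ¬ b ≤ t := by
        rintro b (_ | ⟨_, hb⟩)
        exacts [ha, fun hbt => ha ((hl.1 b hb).trans hbt)]
      have hzero : (a :: l).countP (· ≤ t) = 0 :=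
        List.countP_eq_zero.2 fun b hb => by simpa using hgt b hb
      simp only [hzero, Nat.not_lt_zero, iff_false]
      exact hgt _ (List.getElem_mem hk)

section BH

variable {m : ℕ}

noncomputable def countLE (p : Fin m → ℝ) (t : ℝ) : ℕ :=
  (Finset.univ.filter (fun j => p j ≤ t)).card

theorem orderStat_le_iff (p : Fin m → ℝ) {k : ℕ} (hk1 : 1 ≤ k) (hkm : k ≤ m) (t : ℝ) :
    orderStat p k ≤ t ↔ k ≤ countLE p t := by
  set l := Multiset.sort (Multiset.map p Finset.univ.val) (· ≤ ·)
  have hk : k - 1 < l.length := by simp [l]; omega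
  have hcount : l.countP (· ≤ t) = countLE p t := by
    rw [← Multiset.coe_countP, Multiset.sort_eq, Multiset.countP_map]
    rfl
  rw [orderStat, List.getD_eq_getElem _ _ hk,
    (Multiset.pairwise_sort _ _).getElem_le_iff_lt_countP t hk, hcount]
  omega

theorem countLE_le_card (p : Fin m → ℝ) (t : ℝ) : countLE p t ≤ m :=
  (Finset.card_filter_le _ _).trans_eq (Finset.card_fin m)

theorem countLE_mono (p : Fin m → ℝ) : Monotone (countLE p) :=
  fun _ _ hst => Finset.card_le_card fun _ hj => by
    simp only [Finset.mem_filter, Finset.mem_univ, true_and] at hj ⊢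
    exact hj.trans hst

theorem countLE_antitone (t : ℝ) : Antitone fun p : Fin m → ℝ => countLE p t :=
  fun _ _ hqp => Finset.card_le_card fun j hj => by
    simp only [Finset.mem_filter, Finset.mem_univ, true_and] at hj ⊢
    exact (hqp j).trans hj

theorem countLE_update_of_le {p : Fin m → ℝ} {j : Fin m} {c t : ℝ} (hc : c ≤ t)
    (hpj : p j ≤ t) : countLE (Function.update p j c) t = countLE p t := by
  unfold countLE
  congr 1
  refine Finset.filter_congr fun i _ => ?_
  rcases eq_or_ne i j with rfl | hij
  · simp [hc, hpj]
  · rw [Function.update_of_ne hij]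

theorem measurable_countLE (t : ℝ) : Measurable fun p : Fin m → ℝ => countLE p t := by
  simp only [countLE, Finset.card_filter]
  exact Finset.measurable_sum _ fun j _ =>
    Measurable.ite (measurableSet_le (measurable_pi_apply j) measurable_const)
      measurable_const measurable_const

theorem kstar_eq_findGreatest (p : Fin m → ℝ) (α : ℝ) :
    kstar p α = Nat.findGreatest (fun k => k ≤ countLE p (α * k / m)) m := by
  have hset : {k | k ∈ Finset.Icc 1 m ∧ orderStat p k ≤ α * k / m} =
      {k | 1 ≤ k ∧ k ≤ m ∧ k ≤ countLE p (α * k / m)} := by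
    ext k
    simp only [Set.mem_ofPred_eq, Finset.mem_Icc, and_assoc]
    constructor
    · rintro ⟨h1, hm, h⟩; exact ⟨h1, hm, (orderStat_le_iff p h1 hm _).1 h⟩
    · rintro ⟨h1, hm, h⟩; exact ⟨h1, hm, (orderStat_le_iff p h1 hm _).2 h⟩
  rw [kstar, hset]
  set P : ℕ → Prop := fun k => k ≤ countLE p (α * k / m)
  refine le_antisymm (csSup_le' fun k ⟨_, hkm, hk⟩ => Nat.le_findGreatest hkm hk) ?_
  rcases Nat.eq_zero_or_pos (Nat.findGreatest P m) with h0 | hpos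
  · exact h0 ▸ Nat.zero_le _
  · exact le_csSup ⟨m, fun k hk => hk.2.1⟩
      ⟨hpos, Nat.findGreatest_le m,
        Nat.findGreatest_spec (P := P) (Nat.zero_le m) (Nat.zero_le _)⟩

theorem kstar_le_card (p : Fin m → ℝ) (α : ℝ) : kstar p α ≤ m := by
  rw [kstar_eq_findGreatest]
  exact Nat.findGreatest_le m

theorem kstar_le_countLE (p : Fin m → ℝ) (α : ℝ) :
    kstar p α ≤ countLE p (α * kstar p α / m) := by
  rw [kstar_eq_findGreatest]
  exact Nat.findGreatest_spec (P := fun k => k ≤ countLE p (α * k / m)) (Nat.zero_le m)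
    (Nat.zero_le _)

theorem le_kstar_of_le_countLE {p : Fin m → ℝ} {α : ℝ} {k : ℕ} (hkm : k ≤ m)
    (hk : k ≤ countLE p (α * k / m)) : k ≤ kstar p α := by
  rw [kstar_eq_findGreatest]
  exact Nat.le_findGreatest hkm hk

theorem measurable_kstar (α : ℝ) : Measurable fun p : Fin m → ℝ => kstar p α := by
  simp only [kstar_eq_findGreatest]
  exact measurable_findGreatest fun k _ => measurable_countLE _ measurableSet_Ici

theorem kstar_antitone (α : ℝ) : Antitone fun p : Fin m → ℝ => kstar p α := fun _ _ hqp => by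
  simp only [kstar_eq_findGreatest]
  exact Nat.findGreatest_mono_left (fun k hk => hk.trans (countLE_antitone _ hqp)) m

theorem card_BH (p : Fin m → ℝ) {α : ℝ} (hα : 0 ≤ α) : (BH p α).card = kstar p α := by
  change countLE p _ = _
  refine le_antisymm (not_lt.1 fun hlt => ?_) (kstar_le_countLE p α)
  have hthr : α * kstar p α / m ≤ α * (kstar p α + 1 : ℕ) / m := by
    gcongr
    exact_mod_cast Nat.le_succ _
  have hsucc : kstar p α + 1 ≤ countLE p (α * (kstar p α + 1 : ℕ) / m) :=
    hlt.trans_le (countLE_mono p hthr)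
  exact Nat.not_succ_le_self _ (le_kstar_of_le_countLE (hsucc.trans (countLE_le_card p _)) hsucc)

theorem kstar_eq_kstar_update_of_le {p : Fin m → ℝ} {α : ℝ} {j : Fin m} (hpj : 0 ≤ p j)
    (h : p j ≤ α * kstar (Function.update p j 0) α / m) :
    kstar p α = kstar (Function.update p j 0) α := by
  refine le_antisymm (kstar_antitone α (update_le_self_iff.2 hpj))
    (le_kstar_of_le_countLE (kstar_le_card _ α) ?_)
  rw [← countLE_update_of_le (hpj.trans h) h]
  exact kstar_le_countLE _ α

theorem mem_BH_iff {p : Fin m → ℝ} {α : ℝ} (hα : 0 ≤ α) {j : Fin m} (hpj : 0 ≤ p j) :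
    j ∈ BH p α ↔ p j ≤ α * kstar (Function.update p j 0) α / m := by
  simp only [BH, Finset.mem_filter, Finset.mem_univ, true_and]
  refine ⟨fun h => h.trans ?_, fun h => (kstar_eq_kstar_update_of_le hpj h).symm ▸ h⟩
  gcongr
  exact_mod_cast kstar_antitone α (update_le_self_iff.2 hpj)

theorem fdp_eq_sum (p : Fin m → ℝ) {α : ℝ} (hα : 0 ≤ α) (hp : ∀ j, 0 ≤ p j)
    (H0 : Finset (Fin m)) :
    ((BH p α ∩ H0).card : ℝ) / ((max (BH p α).card 1 : ℕ) : ℝ) =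
      ∑ j ∈ H0, if p j ≤ α * kstar (Function.update p j 0) α / m
        then ((kstar (Function.update p j 0) α : ℕ) : ℝ)⁻¹ else 0 := by
  classical
  rw [Finset.inter_comm, ← Finset.filter_mem_eq_inter, Finset.card_filter, Nat.cast_sum,
    Finset.sum_div]
  refine Finset.sum_congr rfl fun j _ => ?_
  by_cases hj : j ∈ BH p α
  · have hpos : 1 ≤ (BH p α).card := Finset.card_pos.2 ⟨j, hj⟩
    have hthr := (mem_BH_iff hα (hp j)).1 hj
    rw [if_pos hj, if_pos hthr, max_eq_left hpos, card_BH p hα,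
      kstar_eq_kstar_update_of_le (hp j) hthr]
    simp
  · rw [if_neg hj, if_neg (mt (mem_BH_iff hα (hp j)).2 hj)]
    simp

end BH

section RandomThreshold

variable {Ω β : Type*} {K : Ω → ℕ} {X : Ω → β} {B : ℕ → Set β} {s : Finset ℕ}

theorem indicator_mem_comp_eq_sum (f : ℕ → ℝ) (hKs : ∀ ω, K ω ∈ s) :
    {ω | X ω ∈ B (K ω)}.indicator (f ∘ K) =
      fun ω => ∑ k ∈ s, (K ⁻¹' {k} ∩ X ⁻¹' B k).indicator (fun _ => f k) ω := by
  classical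
  funext ω
  rw [Finset.sum_eq_single_of_mem (K ω) (hKs ω)]
  · simp [Set.indicator_apply]
  · intro k _ hk
    simp [Ne.symm hk]

variable [MeasurableSpace Ω] [MeasurableSpace β] {μ : Measure Ω}

theorem integrable_indicator_mem_comp [IsFiniteMeasure μ] (f : ℕ → ℝ) (hK : Measurable K)
    (hX : Measurable X) (hB : ∀ k, MeasurableSet (B k)) (hKs : ∀ ω, K ω ∈ s) :
    Integrable ({ω | X ω ∈ B (K ω)}.indicator (f ∘ K)) μ := by
  rw [indicator_mem_comp_eq_sum f hKs]
  exact integrable_finsetSum _ fun k _ =>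
    (integrable_const _).indicator ((hK (measurableSet_singleton k)).inter (hX (hB k)))

theorem integral_indicator_mem_comp_le [IsProbabilityMeasure μ] {f : ℕ → ℝ} {c : ℝ}
    (hK : Measurable K) (hX : Measurable X) (hB : ∀ k, MeasurableSet (B k))
    (hKs : ∀ ω, K ω ∈ s) (hKX : IndepFun K X μ)
    (hc : ∀ k ∈ s, f k * μ.real (X ⁻¹' B k) ≤ c) :
    ∫ ω, {ω | X ω ∈ B (K ω)}.indicator (f ∘ K) ω ∂μ ≤ c := by
  have hmeas k : MeasurableSet (K ⁻¹' {k} ∩ X ⁻¹' B k) :=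
    (hK (measurableSet_singleton k)).inter (hX (hB k))
  calc ∫ ω, {ω | X ω ∈ B (K ω)}.indicator (f ∘ K) ω ∂μ
      = ∑ k ∈ s, μ.real (K ⁻¹' {k}) * (f k * μ.real (X ⁻¹' B k)) := by
        rw [indicator_mem_comp_eq_sum f hKs,
          integral_finsetSum _ fun k _ => (integrable_const _).indicator (hmeas k)]
        refine Finset.sum_congr rfl fun k _ => ?_
        rw [integral_indicator_const _ (hmeas k), measureReal_def,
          hKX.measure_inter_preimage_eq_mul _ _ (measurableSet_singleton k) (hB k),
          ENNReal.toReal_mul, smul_eq_mul]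
        simp only [measureReal_def]
        ring
    _ ≤ ∑ k ∈ s, μ.real (K ⁻¹' {k}) * c :=
        Finset.sum_le_sum fun k hk => mul_le_mul_of_nonneg_left (hc k hk) measureReal_nonneg
    _ = c := by
        have huniv : K ⁻¹' s = Set.univ := Set.eq_univ_of_forall hKs
        rw [← Finset.sum_mul, sum_measureReal_preimage_singleton s fun k _ =>
          hK (measurableSet_singleton k), huniv, probReal_univ, one_mul]

end RandomThreshold

def SuperUniform {Ω : Type*} [MeasurableSpace Ω] (μ : Measure Ω) (X : Ω → ℝ) : Prop :=
  ∀ t ∈ Set.Icc (0 : ℝ) 1, μ {ω | X ω ≤ t} ≤ ENNReal.ofReal t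

namespace SuperUniform

variable {Ω : Type*} [MeasurableSpace Ω] {μ : Measure Ω} [IsProbabilityMeasure μ] {X : Ω → ℝ}

theorem measureReal_le (hX : SuperUniform μ X) {t : ℝ} (ht : 0 ≤ t) :
    μ.real {ω | X ω ≤ t} ≤ t := by
  rcases le_total t 1 with ht1 | ht1
  · exact ENNReal.toReal_le_of_le_ofReal ht (hX t ⟨ht, ht1⟩)
  · exact measureReal_le_one.trans ht1

theorem inv_mul_measureReal_le (hX : SuperUniform μ X) {α : ℝ} (hα : 0 ≤ α) (k m : ℕ) :
    (k : ℝ)⁻¹ * μ.real {ω | X ω ≤ α * k / m} ≤ α / m := by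
  rcases Nat.eq_zero_or_pos k with rfl | hk
  · simp only [CharP.cast_eq_zero, inv_zero, zero_mul]
    positivity
  · calc (k : ℝ)⁻¹ * μ.real {ω | X ω ≤ α * k / m} ≤ (k : ℝ)⁻¹ * (α * k / m) :=
          mul_le_mul_of_nonneg_left (hX.measureReal_le (by positivity)) (by positivity)
      _ = α / m := by field_simp

end SuperUniform

theorem ProbabilityTheory.iIndepFun.indepFun_comp_update {Ω ι β γ : Type*} [MeasurableSpace Ω]
    {μ : Measure Ω} [Fintype ι] [DecidableEq ι] [MeasurableSpace β] [MeasurableSpace γ]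
    {p : ι → Ω → β} (hp : iIndepFun p μ) (hmeas : ∀ i, Measurable (p i))
    {φ : (ι → β) → γ} (hφ : Measurable φ) (j : ι) (c : β) :
    IndepFun (fun ω => φ (Function.update (fun i => p i ω) j c)) (p j) μ := by
  have h := hp.indepFun_finset {j}ᶜ {j} disjoint_compl_left hmeas
  convert h.comp (hφ.comp (measurable_updateFinset (x := fun _ => c)))
    (measurable_pi_apply ⟨j, Finset.mem_singleton_self j⟩) using 1
  · funext ω
    simp only [Function.comp_apply]
    congr 1
    funext i
    by_cases hi : i = j <;> simp [Function.updateFinset, hi]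
  · rfl

theorem BH_FDR_control_general {Ω : Type*} [MeasurableSpace Ω]
    (μ : Measure Ω) [IsProbabilityMeasure μ]
    (m : ℕ) (α : ℝ) (hα : α ∈ Set.Ioo (0 : ℝ) 1)
    (p : Fin m → Ω → ℝ) (hmeas : ∀ j, Measurable (p j))
    (hrange : ∀ j ω, p j ω ∈ Set.Icc (0 : ℝ) 1)
    (hindep : iIndepFun p μ)
    (H0 : Finset (Fin m))
    (hnull : ∀ j ∈ H0, ∀ t ∈ Set.Icc (0 : ℝ) 1, μ {ω | p j ω ≤ t} ≤ ENNReal.ofReal t) :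
    (∫ ω, ((((BH (fun j => p j ω) α) ∩ H0).card : ℝ)
        / ((max (BH (fun j => p j ω) α).card 1 : ℕ) : ℝ)) ∂μ) ≤ α * H0.card / m ∧
    (∫ ω, ((((BH (fun j => p j ω) α) ∩ H0).card : ℝ)
        / ((max (BH (fun j => p j ω) α).card 1 : ℕ) : ℝ)) ∂μ) ≤ α := by
  have hα0 : 0 ≤ α := hα.1.le
  set FDP : Ω → ℝ := fun ω => ((((BH (fun j => p j ω) α) ∩ H0).card : ℝ)
    / ((max (BH (fun j => p j ω) α).card 1 : ℕ) : ℝ))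
  set K : Fin m → Ω → ℕ := fun j ω => kstar (Function.update (fun i => p i ω) j 0) α
  have hK j : Measurable (K j) :=
    (measurable_kstar α).comp (measurable_update_left.comp (measurable_pi_lambda _ hmeas))
  have hKm j ω : K j ω ∈ Finset.range (m + 1) := Finset.mem_range_succ_iff.2 (kstar_le_card _ α)
  have hfdp : FDP = fun ω => ∑ j ∈ H0,
      {ω | p j ω ∈ Set.Iic (α * K j ω / m)}.indicator ((fun k : ℕ => (k : ℝ)⁻¹) ∘ K j) ω := by
    funext ω
    simp only [FDP]
    rw [fdp_eq_sum _ hα0 fun j => (hrange j ω).1]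
    simp [Set.indicator_apply, K]
  have hfirst : ∫ ω, FDP ω ∂μ ≤ α * H0.card / m := by
    rw [hfdp, integral_finsetSum _ fun j _ => integrable_indicator_mem_comp _ (hK j) (hmeas j)
      (B := fun k => Set.Iic (α * k / m)) (fun _ => measurableSet_Iic) (hKm j)]
    calc _ ≤ ∑ _j ∈ H0, α / m := Finset.sum_le_sum fun j hj =>
          integral_indicator_mem_comp_le (hK j) (hmeas j) (fun _ => measurableSet_Iic) (hKm j)
            (hindep.indepFun_comp_update hmeas (measurable_kstar α) j 0)
            fun k _ => SuperUniform.inv_mul_measureReal_le (hnull j hj) hα0 k m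
      _ = α * H0.card / m := by rw [Finset.sum_const, nsmul_eq_mul]; ring
  have hH0 : (H0.card : ℝ) ≤ m := by exact_mod_cast H0.card_le_univ.trans_eq (Fintype.card_fin m)
  exact ⟨hfirst, hfirst.trans (div_le_of_le_mul₀ m.cast_nonneg hα0 (by gcongr))⟩

/-- The Benjamini–Hochberg procedure at level `α`, applied to mutually independent p-values
that are super-uniform on the set `H0` of true nulls, controls the FDR:
`E[#(S ∩ H0)/max(|S|,1)] ≤ α |H0| / m ≤ α`. -/
theorem BH_FDR_control {Ω : Type*} [MeasurableSpace Ω]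
    (μ : Measure Ω) [IsProbabilityMeasure μ]
    (m : ℕ) (hm : 0 < m) (α : ℝ) (hα : α ∈ Set.Ioo (0 : ℝ) 1)
    (p : Fin m → Ω → ℝ) (hmeas : ∀ j, Measurable (p j))
    (hrange : ∀ j ω, p j ω ∈ Set.Icc (0 : ℝ) 1)
    (hindep : iIndepFun p μ)
    (H0 : Finset (Fin m))
    (hnull : ∀ j ∈ H0, ∀ t ∈ Set.Icc (0 : ℝ) 1, μ {ω | p j ω ≤ t} ≤ ENNReal.ofReal t) :
    (∫ ω, ((((BH (fun j => p j ω) α) ∩ H0).card : ℝ)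
        / ((max (BH (fun j => p j ω) α).card 1 : ℕ) : ℝ)) ∂μ) ≤ α * H0.card / m ∧
    (∫ ω, ((((BH (fun j => p j ω) α) ∩ H0).card : ℝ)
        / ((max (BH (fun j => p j ω) α).card 1 : ℕ) : ℝ)) ∂μ) ≤ α :=
  BH_FDR_control_general μ m α hα p hmeas hrange hindep H0 hnull
end
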